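/- Let t ∈ ℝ and let K : ℝ → ℝ be continuous with K(x) = 0 for all x < 0, |K(x)| ≤ C e^{x/2} for all x ≥ 0 (some constant C), and suppose that for all complex z with Im(z) > 1/2, ∫₀^∞ K(x) e^{izx} dx = exp(−2θ ξ′(s)/ξ(s)) with s = 1/2 − iz, where θ > 0 and ξ is the Riemann xi function. Then for every f ∈ L²((−∞, t)) and every complex z with Im(z) > 1/2: the function x ↦ ∫_{−∞}^t K(x+y) f(y) dy is defined for all x, vanishes for x < −t, satisfies a bound O(e^{x/2}) as x → +∞, and ∫_{−t}^∞ (∫_{−∞}^t K(x+y) f(y) dy) e^{izx} dx = exp(−2θ ξ′(s)/ξ(s)) · ∫_{−∞}^t f(y) e^{−izy} dy, all integrals converging absolutely. -/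

import Mathlib

/-!
Everything is dominated by `|K(x+y) f(y)| ≤ C e^{x/2} · e^{y/2} |f(y)|`, where
`e^{y/2} |f(y)|` is integrable on `(-∞, t)` by Cauchy–Schwarz, `y ↦ e^{y/2}` being square
integrable there. For `Im z > 1/2` the factor `|e^{izx}| = e^{-x Im z}` makes the dominating
function integrable on `(-t, ∞) × (-∞, t)`, so Fubini applies; the inner integral over `x` is,
by translation invariance of Lebesgue measure and causality of `K`, `e^{-izy}` times the
transform of `K`, which is `exp(-2θ ξ'(s)/ξ(s))` by hypothesis.
-/

open MeasureTheory Set Filter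

/-- The Riemann xi function `ξ(s) = (1/2) s (s-1) π^{-s/2} Γ(s/2) ζ(s)`. -/
noncomputable def xi (s : ℂ) : ℂ :=
  (1/2) * s * (s - 1) * (Real.pi : ℂ) ^ (-s / 2) * Complex.Gamma (s / 2) * riemannZeta s

lemma memLp_two_exp_mul_Iio {c : ℝ} (hc : 0 < c) (t : ℝ) :
    MemLp (fun y => Real.exp (c * y)) 2 (volume.restrict (Iio t)) := by
  refine (memLp_two_iff_integrable_sq (by fun_prop : Continuous _).aestronglyMeasurable).2 ?_
  refine ((integrableOn_exp_mul_Iic (by positivity : 0 < 2 * c) t).mono_set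
    Iio_subset_Iic_self).congr (Eventually.of_forall fun y => ?_)
  simp only [sq, ← Real.exp_add]
  ring_nf

lemma MeasureTheory.MemLp.integrable_exp_mul_mul_abs {f : ℝ → ℝ} {c t : ℝ}
    (hf : MemLp f 2 (volume.restrict (Iio t))) (hc : 0 < c) :
    Integrable (fun y => Real.exp (c * y) * |f y|) (volume.restrict (Iio t)) :=
  (memLp_two_exp_mul_Iio hc t).integrable_mul hf.abs

lemma Complex.norm_exp_I_mul_mul_ofReal (z : ℂ) (x : ℝ) :
    ‖Complex.exp (Complex.I * z * x)‖ = Real.exp (-z.im * x) := by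
  simp [Complex.norm_exp, Complex.mul_re]

lemma Complex.norm_exp_neg_I_mul_mul_ofReal (z : ℂ) (x : ℝ) :
    ‖Complex.exp (-Complex.I * z * x)‖ = Real.exp (z.im * x) := by
  simp [Complex.norm_exp, Complex.mul_re]

section Kernel

variable {K f : ℝ → ℝ} {a C t : ℝ}

lemma abs_kernel_mul_le (hK : ∀ u, |K u| ≤ C * Real.exp (a * u)) (x y : ℝ) :
    |K (x + y) * f y| ≤ C * Real.exp (a * x) * (Real.exp (a * y) * |f y|) := by
  rw [abs_mul]
  calc |K (x + y)| * |f y| ≤ C * Real.exp (a * (x + y)) * |f y| := by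
        gcongr
        exact hK (x + y)
    _ = C * Real.exp (a * x) * (Real.exp (a * y) * |f y|) := by
        rw [mul_add, Real.exp_add]
        ring

lemma integrableOn_kernel_mul (hKm : Measurable K) (hK : ∀ u, |K u| ≤ C * Real.exp (a * u))
    (hf : MemLp f 2 (volume.restrict (Iio t))) (ha : 0 < a) (x : ℝ) :
    IntegrableOn (fun y => K (x + y) * f y) (Iio t) :=
  ((hf.integrable_exp_mul_mul_abs ha).const_mul (C * Real.exp (a * x))).mono'
    ((hKm.comp (measurable_const_add x)).aestronglyMeasurable.mul hf.aestronglyMeasurable)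
    (Eventually.of_forall fun y => (Real.norm_eq_abs _).trans_le (abs_kernel_mul_le hK x y))

lemma setIntegral_kernel_mul_eq_zero (hK0 : ∀ u < 0, K u = 0) {x : ℝ} (hx : x < -t) :
    ∫ y in Iio t, K (x + y) * f y = 0 := by
  refine setIntegral_eq_zero_of_forall_eq_zero fun y hy => ?_
  rw [hK0 (x + y) (by linarith [mem_Iio.mp hy]), zero_mul]

lemma abs_setIntegral_kernel_mul_le (hK : ∀ u, |K u| ≤ C * Real.exp (a * u))
    (hf : MemLp f 2 (volume.restrict (Iio t))) (ha : 0 < a) (x : ℝ) :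
    |∫ y in Iio t, K (x + y) * f y|
      ≤ (C * ∫ y in Iio t, Real.exp (a * y) * |f y|) * Real.exp (a * x) := by
  have h := norm_integral_le_of_norm_le
    ((hf.integrable_exp_mul_mul_abs ha).const_mul (C * Real.exp (a * x)))
    (Eventually.of_forall fun y => (Real.norm_eq_abs _).trans_le (abs_kernel_mul_le hK x y))
  rw [integral_const_mul, Real.norm_eq_abs] at h
  exact h.trans_eq (by ring)

lemma integrable_mul_exp_neg_I_mul (hf : MemLp f 2 (volume.restrict (Iio t))) {z : ℂ}
    (hz : 0 < z.im) :
    Integrable (fun y : ℝ => (f y : ℂ) * Complex.exp (-Complex.I * z * y))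
      (volume.restrict (Iio t)) :=
  (hf.integrable_exp_mul_mul_abs hz).mono'
    ((Complex.continuous_ofReal.comp_aestronglyMeasurable hf.aestronglyMeasurable).mul
      (by fun_prop : Continuous fun y : ℝ => Complex.exp (-Complex.I * z * y)).aestronglyMeasurable)
    (Eventually.of_forall fun y => by
      rw [norm_mul, Complex.norm_exp_neg_I_mul_mul_ofReal, Complex.norm_real, Real.norm_eq_abs,
        mul_comm])

/-- As `K` vanishes on `(-∞, 0)` and `y < t`, the cut at `-t` loses nothing, so this is a
translate of the transform of `K`. -/
lemma setIntegral_Ioi_kernel_translate (hK0 : ∀ u < 0, K u = 0) {y : ℝ} (hy : y < t) (z : ℂ) :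
    ∫ x in Ioi (-t), (K (x + y) : ℂ) * Complex.exp (Complex.I * z * x)
      = Complex.exp (-Complex.I * z * y) *
          ∫ u in Ioi 0, (K u : ℂ) * Complex.exp (Complex.I * z * u) := by
  set φ : ℝ → ℂ := fun u => (K u : ℂ) * Complex.exp (Complex.I * z * u)
  have hφ : ∀ x : ℝ, (K (x + y) : ℂ) * Complex.exp (Complex.I * z * x)
      = φ (x + y) * Complex.exp (-Complex.I * z * y) := by
    intro x
    simp only [φ, mul_assoc, ← Complex.exp_add]
    push_cast
    ring_nf
  calc ∫ x in Ioi (-t), (K (x + y) : ℂ) * Complex.exp (Complex.I * z * x)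
      = ∫ x, φ (x + y) * Complex.exp (-Complex.I * z * y) := by
        simp_rw [hφ]
        refine setIntegral_eq_integral_of_forall_compl_eq_zero fun x hx => ?_
        simp [φ, hK0 (x + y) (by linarith [notMem_Ioi.mp hx])]
    _ = Complex.exp (-Complex.I * z * y) * ∫ u, φ u := by
        rw [integral_mul_const, integral_add_right_eq_self, mul_comm]
    _ = _ := by
        rw [← integral_Ici_eq_integral_Ioi, setIntegral_eq_integral_of_forall_compl_eq_zero]
        intro u hu
        simp [hK0 u (notMem_Ici.mp hu)]

lemma integrable_prod_kernel_mul_exp (hKm : Measurable K)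
    (hK : ∀ u, |K u| ≤ C * Real.exp (a * u)) (hf : MemLp f 2 (volume.restrict (Iio t)))
    (ha : 0 < a) {z : ℂ} (hz : a < z.im) :
    Integrable
      (fun p : ℝ × ℝ => ((K (p.1 + p.2) * f p.2 : ℝ) : ℂ) * Complex.exp (Complex.I * z * p.1))
      ((volume.restrict (Ioi (-t))).prod (volume.restrict (Iio t))) := by
  have hdecay : IntegrableOn (fun x => Real.exp ((a - z.im) * x)) (Ioi (-t)) :=
    integrableOn_exp_mul_Ioi (by linarith) (-t)
  refine ((hdecay.const_mul C).mul_prod (hf.integrable_exp_mul_mul_abs ha)).mono' ?_ ?_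
  · have hKm' : Measurable fun p : ℝ × ℝ => K (p.1 + p.2) := hKm.comp measurable_add
    exact (Complex.continuous_ofReal.comp_aestronglyMeasurable
      (hKm'.aestronglyMeasurable.mul hf.aestronglyMeasurable.comp_snd)).mul
      (by fun_prop : Continuous fun p : ℝ × ℝ => Complex.exp (Complex.I * z * p.1)).aestronglyMeasurable
  · refine Eventually.of_forall fun p => ?_
    rw [norm_mul, Complex.norm_exp_I_mul_mul_ofReal, Complex.norm_real, Real.norm_eq_abs]
    calc |K (p.1 + p.2) * f p.2| * Real.exp (-z.im * p.1)
        ≤ C * Real.exp (a * p.1) * (Real.exp (a * p.2) * |f p.2|) * Real.exp (-z.im * p.1) := by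
          gcongr
          exact abs_kernel_mul_le hK p.1 p.2
      _ = C * Real.exp ((a - z.im) * p.1) * (Real.exp (a * p.2) * |f p.2|) := by
          rw [sub_mul, sub_eq_add_neg, ← neg_mul, Real.exp_add]
          ring

lemma setIntegral_ofReal_kernel_mul_mul_exp (x : ℝ) (z : ℂ) :
    ∫ y in Iio t, ((K (x + y) * f y : ℝ) : ℂ) * Complex.exp (Complex.I * z * x)
      = ((∫ y in Iio t, K (x + y) * f y : ℝ) : ℂ) * Complex.exp (Complex.I * z * x) := by
  rw [integral_mul_const, integral_complex_ofReal]

lemma integrableOn_setIntegral_kernel_mul_exp (hKm : Measurable K)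
    (hK : ∀ u, |K u| ≤ C * Real.exp (a * u)) (hf : MemLp f 2 (volume.restrict (Iio t)))
    (ha : 0 < a) {z : ℂ} (hz : a < z.im) :
    IntegrableOn (fun x : ℝ =>
      ((∫ y in Iio t, K (x + y) * f y : ℝ) : ℂ) * Complex.exp (Complex.I * z * x)) (Ioi (-t)) :=
  (integrable_prod_kernel_mul_exp hKm hK hf ha hz).integral_prod_left.congr
    (Eventually.of_forall fun x => setIntegral_ofReal_kernel_mul_mul_exp x z)

theorem setIntegral_kernel_mul_exp_eq (hKm : Measurable K) (hK0 : ∀ u < 0, K u = 0)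
    (hK : ∀ u, |K u| ≤ C * Real.exp (a * u)) (hf : MemLp f 2 (volume.restrict (Iio t)))
    (ha : 0 < a) {z : ℂ} (hz : a < z.im) :
    ∫ x in Ioi (-t), ((∫ y in Iio t, K (x + y) * f y : ℝ) : ℂ) * Complex.exp (Complex.I * z * x)
      = (∫ u in Ioi 0, (K u : ℂ) * Complex.exp (Complex.I * z * u)) *
          ∫ y in Iio t, (f y : ℂ) * Complex.exp (-Complex.I * z * y) := by
  set E := ∫ u in Ioi 0, (K u : ℂ) * Complex.exp (Complex.I * z * u)
  calc _ = ∫ x in Ioi (-t), ∫ y in Iio t,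
            ((K (x + y) * f y : ℝ) : ℂ) * Complex.exp (Complex.I * z * x) := by
        simp_rw [setIntegral_ofReal_kernel_mul_mul_exp]
    _ = ∫ y in Iio t, ∫ x in Ioi (-t),
            ((K (x + y) * f y : ℝ) : ℂ) * Complex.exp (Complex.I * z * x) :=
        integral_integral_swap (integrable_prod_kernel_mul_exp hKm hK hf ha hz)
    _ = ∫ y in Iio t, E * ((f y : ℂ) * Complex.exp (-Complex.I * z * y)) := by
        refine setIntegral_congr_fun measurableSet_Iio fun y hy => ?_
        have hfactor : ∀ x : ℝ, ((K (x + y) * f y : ℝ) : ℂ) * Complex.exp (Complex.I * z * x)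
            = (f y : ℂ) * ((K (x + y) : ℂ) * Complex.exp (Complex.I * z * x)) := fun x => by
          push_cast
          ring
        simp_rw [hfactor]
        rw [integral_const_mul, setIntegral_Ioi_kernel_translate hK0 hy]
        ring
    _ = E * ∫ y in Iio t, (f y : ℂ) * Complex.exp (-Complex.I * z * y) := integral_const_mul _ _

end Kernel

theorem statement14_general (t θ C : ℝ) (K : ℝ → ℝ)
    (hKc : Continuous K)
    (hK0 : ∀ x < (0:ℝ), K x = 0)
    (hKb : ∀ x ≥ (0:ℝ), |K x| ≤ C * Real.exp (x / 2))
    (hFT : ∀ z : ℂ, 1/2 < z.im →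
      ∫ x in Ioi (0:ℝ), (K x : ℂ) * Complex.exp (Complex.I * z * x)
        = Complex.exp (-2 * θ *
            (deriv xi (1/2 - Complex.I * z) / xi (1/2 - Complex.I * z)))) :
    ∀ f : ℝ → ℝ, MemLp f 2 (volume.restrict (Iio t)) →
      (∀ x : ℝ, IntegrableOn (fun y => K (x + y) * f y) (Iio t)) ∧
      (∀ x < -t, (∫ y in Iio t, K (x + y) * f y) = 0) ∧
      (∃ C' : ℝ, ∀ x : ℝ, |∫ y in Iio t, K (x + y) * f y| ≤ C' * Real.exp (x / 2)) ∧
      (∀ z : ℂ, 1/2 < z.im →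
        IntegrableOn (fun x : ℝ =>
          ((∫ y in Iio t, K (x + y) * f y : ℝ) : ℂ) * Complex.exp (Complex.I * z * x))
          (Ioi (-t)) ∧
        Integrable (fun y : ℝ => (f y : ℂ) * Complex.exp (-Complex.I * z * y))
          (volume.restrict (Iio t)) ∧
        ∫ x in Ioi (-t),
            ((∫ y in Iio t, K (x + y) * f y : ℝ) : ℂ) * Complex.exp (Complex.I * z * x)
          = Complex.exp (-2 * θ *
              (deriv xi (1/2 - Complex.I * z) / xi (1/2 - Complex.I * z))) *
            ∫ y in Iio t, (f y : ℂ) * Complex.exp (-Complex.I * z * y)) := by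
  intro f hf
  have hC : 0 ≤ C := (abs_nonneg _).trans (by simpa using hKb 0 le_rfl)
  have hK : ∀ u, |K u| ≤ C * Real.exp (1 / 2 * u) := by
    intro u
    rcases le_or_gt 0 u with hu | hu
    · simpa only [one_div_mul_eq_div] using hKb u hu
    · rw [hK0 u hu, abs_zero]
      positivity
  have hhalf : (0 : ℝ) < 1 / 2 := by norm_num
  refine ⟨integrableOn_kernel_mul hKc.measurable hK hf hhalf,
    fun x hx => setIntegral_kernel_mul_eq_zero hK0 hx,
    ⟨_, fun x => by simpa only [one_div_mul_eq_div] using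
      abs_setIntegral_kernel_mul_le hK hf hhalf x⟩,
    fun z hz => ⟨integrableOn_setIntegral_kernel_mul_exp hKc.measurable hK hf hhalf hz,
      integrable_mul_exp_neg_I_mul hf (hhalf.trans hz), ?_⟩⟩
  rw [setIntegral_kernel_mul_exp_eq hKc.measurable hK0 hK hf hhalf hz, hFT z hz]

/-- for `f ∈ L²((-∞,t))` the function `(K[t]f)(x) = ∫_{-∞}^t K(x+y)f(y)dy`
is defined everywhere, vanishes for `x < -t`, is `O(e^{x/2})`, and its Fourier transform
satisfies `(F K f)(z) = exp(-2θ ξ'/ξ(s)) (F f)(-z)` for `Im z > 1/2`, `s = 1/2 - iz`,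
all integrals converging absolutely. -/
theorem statement14 (t θ C : ℝ) (hθ : 0 < θ) (K : ℝ → ℝ)
    (hKc : Continuous K)
    (hK0 : ∀ x < (0:ℝ), K x = 0)
    (hKb : ∀ x ≥ (0:ℝ), |K x| ≤ C * Real.exp (x / 2))
    (hFT : ∀ z : ℂ, 1/2 < z.im →
      ∫ x in Ioi (0:ℝ), (K x : ℂ) * Complex.exp (Complex.I * z * x)
        = Complex.exp (-2 * θ *
            (deriv xi (1/2 - Complex.I * z) / xi (1/2 - Complex.I * z)))) :
    ∀ f : ℝ → ℝ, MemLp f 2 (volume.restrict (Iio t)) →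
      (∀ x : ℝ, IntegrableOn (fun y => K (x + y) * f y) (Iio t)) ∧
      (∀ x < -t, (∫ y in Iio t, K (x + y) * f y) = 0) ∧
      (∃ C' : ℝ, ∀ x : ℝ, |∫ y in Iio t, K (x + y) * f y| ≤ C' * Real.exp (x / 2)) ∧
      (∀ z : ℂ, 1/2 < z.im →
        IntegrableOn (fun x : ℝ =>
          ((∫ y in Iio t, K (x + y) * f y : ℝ) : ℂ) * Complex.exp (Complex.I * z * x))
          (Ioi (-t)) ∧
        Integrable (fun y : ℝ => (f y : ℂ) * Complex.exp (-Complex.I * z * y))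
          (volume.restrict (Iio t)) ∧
        ∫ x in Ioi (-t),
            ((∫ y in Iio t, K (x + y) * f y : ℝ) : ℂ) * Complex.exp (Complex.I * z * x)
          = Complex.exp (-2 * θ *
              (deriv xi (1/2 - Complex.I * z) / xi (1/2 - Complex.I * z))) *
            ∫ y in Iio t, (f y : ℂ) * Complex.exp (-Complex.I * z * y)) :=
  statement14_general t θ C K hKc hK0 hKb hFT
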